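/- arXiv:1711.08594 — 3 statements merged into one kernel-verified Lean document; each statement's English description precedes it below -/
import Mathlib

section
/- Let M be strictly positive definite in ℝ^{d×d} and for each t let x_{t,1},…,x_{t,K_t} ∈ ℝ^d. Define M_t = M_{t-1} + Σ_{k=1}^{K_t} x_{t,k} x_{t,k}ᵀ with M_0 = M. Denote ‖x‖_{A}² = xᵀ A x. If Σ_{k=1}^{K_t} ‖x_{t,k}‖²_{M_{t-1}^{-1}} ≤ 1 for every t ≤ n, then Σ_{t=1}^n Σ_{k=1}^{K_t} ‖x_{t,k}‖²_{M_{t-1}^{-1}} ≤ 2 log(det(M_n)/det(M)). -/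
/-!
Write `S_t = ∑ₖ x_{t,k} x_{t,k}ᵀ` and `u_t = tr (S_t M_{t-1}⁻¹) = ∑ₖ ‖x_{t,k}‖²_{M_{t-1}⁻¹}`.
Factoring `M_{t-1} = Bᴴ B` gives `M_t = Bᴴ (1 + A) B` with `A = B⁻ᴴ S_t B⁻¹` positive semidefinite
and `tr A = u_t`; since the eigenvalues of `1 + A` are at least `1`, `det (1 + A) ≥ 1 + tr A`, so
`log (1 + u_t) ≤ log det M_t - log det M_{t-1}`. As `u_t ≤ 1`, `u_t ≤ 2 log (1 + u_t)`, and the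
sum over `t` telescopes.
-/

open Matrix Finset

theorem Finset.one_add_sum_le_prod_one_add {ι R : Type*} [CommSemiring R] [PartialOrder R]
    [IsOrderedRing R] (s : Finset ι) {f : ι → R} (hf : ∀ i ∈ s, 0 ≤ f i) :
    1 + ∑ i ∈ s, f i ≤ ∏ i ∈ s, (1 + f i) := by
  induction s using Finset.cons_induction with
  | empty => simp
  | cons a s ha ih =>
    rw [sum_cons, prod_cons]
    have hfa : 0 ≤ f a := hf a (mem_cons_self a s)
    have hs : ∀ i ∈ s, 0 ≤ f i := fun i hi ↦ hf i (mem_cons_of_mem hi)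
    calc 1 + (f a + ∑ i ∈ s, f i)
        ≤ 1 + f a + ∑ i ∈ s, f i + f a * ∑ i ∈ s, f i := by
          rw [← add_assoc]; exact le_add_of_nonneg_right (mul_nonneg hfa (sum_nonneg hs))
      _ = (1 + f a) * (1 + ∑ i ∈ s, f i) := by ring
      _ ≤ (1 + f a) * ∏ i ∈ s, (1 + f i) := by
          gcongr
          exacts [add_nonneg zero_le_one hfa, ih hs]

theorem Real.self_le_two_mul_log_one_add {x : ℝ} (h0 : 0 ≤ x) (h2 : x ≤ 2) :
    x ≤ 2 * Real.log (1 + x) := by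
  have h := Real.le_log_one_add_of_nonneg h0
  rw [div_le_iff₀ (by linarith)] at h
  nlinarith

namespace Matrix

theorem trace_vecMulVec_mul {n R : Type*} [Fintype n] [CommSemiring R] (x : n → R)
    (B : Matrix n n R) : (vecMulVec x x * B).trace = x ⬝ᵥ B *ᵥ x := by
  rw [vecMulVec_mul, trace_vecMulVec, dotProduct_mulVec, dotProduct_comm]

theorem posSemidef_sum_vecMulVec_self {ι n : Type*} [Fintype ι] [Fintype n] (x : ι → n → ℝ) :
    (∑ k, vecMulVec (x k) (x k)).PosSemidef :=
  posSemidef_sum _ fun k _ ↦ by simpa using posSemidef_vecMulVec_self_star (x k)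

variable {n : Type*} [Fintype n] [DecidableEq n]

theorem PosSemidef.one_le_of_mem_spectrum_one_add {A : Matrix n n ℝ} (hA : A.PosSemidef)
    {μ : ℝ} (hμ : μ ∈ spectrum ℝ (1 + A)) : 1 ≤ μ := by
  rw [← map_one (algebraMap ℝ (Matrix n n ℝ)), ← spectrum.singleton_add_eq] at hμ
  obtain ⟨_, rfl, ν, hν, rfl⟩ := hμ
  have hν_nonneg : 0 ≤ ν := (posSemidef_iff_isHermitian_and_spectrum_nonneg.mp hA).2 hν
  linarith

theorem PosSemidef.one_add_trace_le_det_one_add {A : Matrix n n ℝ} (hA : A.PosSemidef) :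
    1 + A.trace ≤ (1 + A).det := by
  have hB : (1 + A).IsHermitian := isHermitian_one.add hA.isHermitian
  have hμ (i : n) : 1 ≤ hB.eigenvalues i := hA.one_le_of_mem_spectrum_one_add <| by
    rw [hB.spectrum_real_eq_range_eigenvalues]
    exact ⟨i, rfl⟩
  have htrace : A.trace = ∑ i, (hB.eigenvalues i - 1) := by
    have h := hB.trace_eq_sum_eigenvalues
    rw [trace_add, trace_one] at h
    simp only [RCLike.ofReal_real_eq_id, id] at h
    rw [sum_sub_distrib, ← h]
    simp
  have hdet : (1 + A).det = ∏ i, (1 + (hB.eigenvalues i - 1)) := by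
    simp [hB.det_eq_prod_eigenvalues]
  rw [htrace, hdet]
  exact one_add_sum_le_prod_one_add _ fun i _ ↦ sub_nonneg.mpr (hμ i)

open scoped MatrixOrder in
theorem PosDef.det_mul_one_add_trace_le_det_add {M S : Matrix n n ℝ} (hM : M.PosDef)
    (hS : S.PosSemidef) : M.det * (1 + (S * M⁻¹).trace) ≤ (M + S).det := by
  obtain ⟨B, rfl⟩ := CStarAlgebra.nonneg_iff_eq_star_mul_self.mp hM.posSemidef.nonneg
  have hBdet : IsUnit B.det :=
    (isUnit_iff_isUnit_det B).mp (isUnit_of_mul_isUnit_right hM.isUnit)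
  have hBHdet : IsUnit Bᴴ.det := by rwa [det_conjTranspose, star_trivial]
  set A := (B⁻¹)ᴴ * S * B⁻¹
  have hA : A.PosSemidef := hS.conjTranspose_mul_mul_same B⁻¹
  have hfactor : star B * B + S = star B * (1 + A) * B := by
    simp only [A, star_eq_conjTranspose, conjTranspose_nonsing_inv, mul_add, add_mul, mul_one,
      ← mul_assoc, mul_nonsing_inv _ hBHdet, one_mul]
    rw [mul_assoc _ _ B, nonsing_inv_mul _ hBdet, mul_one]
  have htrace : A.trace = (S * (star B * B)⁻¹).trace := by
    rw [trace_mul_cycle, Matrix.mul_inv_rev, star_eq_conjTranspose, conjTranspose_nonsing_inv,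
      trace_mul_comm]
  have hdet : (star B * B + S).det = (star B * B).det * (1 + A).det := by
    rw [hfactor, det_mul, det_mul, det_mul]
    ring
  rw [hdet, ← htrace]
  exact mul_le_mul_of_nonneg_left hA.one_add_trace_le_det_one_add hM.det_pos.le

open scoped MatrixOrder in
theorem PosSemidef.trace_mul_nonneg {S T : Matrix n n ℝ} (hS : S.PosSemidef)
    (hT : T.PosSemidef) : 0 ≤ (S * T).trace := by
  obtain ⟨C, rfl⟩ := CStarAlgebra.nonneg_iff_eq_star_mul_self.mp hT.nonneg
  rw [← mul_assoc, trace_mul_comm, ← mul_assoc, star_eq_conjTranspose]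
  exact (hS.mul_mul_conjTranspose_same C).trace_nonneg

theorem PosDef.log_one_add_trace_le_log_det_add_sub {M S : Matrix n n ℝ} (hM : M.PosDef)
    (hS : S.PosSemidef) :
    Real.log (1 + (S * M⁻¹).trace) ≤ Real.log (M + S).det - Real.log M.det := by
  have htrace : 0 ≤ (S * M⁻¹).trace := hS.trace_mul_nonneg hM.inv.posSemidef
  rw [← Real.log_div (hM.add_posSemidef hS).det_pos.ne' hM.det_pos.ne']
  refine Real.log_le_log (by linarith) ?_
  rw [le_div_iff₀ hM.det_pos, mul_comm]
  exact hM.det_mul_one_add_trace_le_det_add hS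

end Matrix

theorem sum_selfNormalized_sq_le_two_log_det (d n : ℕ)
    (M0 : Matrix (Fin d) (Fin d) ℝ) (hM0 : M0.PosDef)
    (K : ℕ → ℕ) (x : (t : ℕ) → Fin (K t) → Fin d → ℝ)
    (M : ℕ → Matrix (Fin d) (Fin d) ℝ)
    (h0 : M 0 = M0)
    (hrec : ∀ t, M (t + 1) = M t + ∑ k, vecMulVec (x (t + 1) k) (x (t + 1) k))
    (hbound : ∀ t < n, ∑ k, x (t + 1) k ⬝ᵥ (M t)⁻¹ *ᵥ x (t + 1) k ≤ 1) :
    ∑ t ∈ Finset.range n, ∑ k, x (t + 1) k ⬝ᵥ (M t)⁻¹ *ᵥ x (t + 1) k ≤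
      2 * Real.log ((M n).det / M0.det) := by
  have hS (t : ℕ) := posSemidef_sum_vecMulVec_self (x (t + 1))
  have hM (t : ℕ) : (M t).PosDef := by
    induction t with
    | zero => rwa [h0]
    | succ t ih => rw [hrec t]; exact ih.add_posSemidef (hS t)
  set u : ℕ → ℝ := fun t ↦ ∑ k, x (t + 1) k ⬝ᵥ (M t)⁻¹ *ᵥ x (t + 1) k
  have hu (t : ℕ) : ((∑ k, vecMulVec (x (t + 1) k) (x (t + 1) k)) * (M t)⁻¹).trace = u t := by
    simp only [u, sum_mul, trace_sum, trace_vecMulVec_mul]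
  have hlog (t : ℕ) :
      Real.log (1 + u t) ≤ Real.log (M (t + 1)).det - Real.log (M t).det := by
    simpa only [hu, ← hrec] using (hM t).log_one_add_trace_le_log_det_add_sub (hS t)
  have hu_nonneg (t : ℕ) : 0 ≤ u t := hu t ▸ (hS t).trace_mul_nonneg (hM t).inv.posSemidef
  calc ∑ t ∈ range n, u t ≤ ∑ t ∈ range n, 2 * Real.log (1 + u t) :=
        sum_le_sum fun t ht ↦ Real.self_le_two_mul_log_one_add (hu_nonneg t)
          (by linarith [hbound t (mem_range.mp ht)])
    _ ≤ ∑ t ∈ range n, 2 * (Real.log (M (t + 1)).det - Real.log (M t).det) :=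
        sum_le_sum fun t _ ↦ by linarith [hlog t]
    _ = 2 * Real.log ((M n).det / M0.det) := by
        rw [← mul_sum, sum_range_sub (fun t ↦ Real.log (M t).det), h0,
          Real.log_div (hM n).det_pos.ne' hM0.det_pos.ne']
end

section
/- Let λ ≥ KL², M_0 = λI in ℝ^{d×d}, and for each t ≤ n let x_{t,1},…,x_{t,K_t} ∈ ℝ^d with ‖x_{t,k}‖₂ ≤ L and K_t ≤ K. Define M_t = M_{t-1} + Σ_{k=1}^{K_t} x_{t,k} x_{t,k}ᵀ. Then Σ_{t=1}^n Σ_{k=1}^{K_t} ‖x_{t,k}‖_{M_{t-1}^{-1}} ≤ sqrt(2 d n K log(1 + nKL²/(λd))). -/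
open Matrix Finset
open scoped MatrixOrder

private lemma aux_one_add_sum_le_prod {ι : Type*} (s : Finset ι) (f : ι → ℝ)
    (hf : ∀ i ∈ s, 0 ≤ f i) : 1 + ∑ i ∈ s, f i ≤ ∏ i ∈ s, (1 + f i) := by
  induction s using Finset.cons_induction with
  | empty => simp
  | cons a s ha ih =>
    rw [Finset.sum_cons, Finset.prod_cons]
    have h1 : 0 ≤ f a := hf a (Finset.mem_cons_self _ _)
    have h2 : ∀ i ∈ s, 0 ≤ f i := fun i hi => hf i (Finset.mem_cons_of_mem hi)
    have h3 := ih h2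
    have hs : 0 ≤ ∑ i ∈ s, f i := Finset.sum_nonneg h2
    nlinarith

private lemma aux_psd_vecMulVec {d : ℕ} (x : Fin d → ℝ) : (vecMulVec x x).PosSemidef := by
  refine Matrix.PosSemidef.of_dotProduct_mulVec_nonneg ?_ fun y => ?_
  · ext i j
    simp [vecMulVec_apply, conjTranspose_apply, mul_comm]
  · have h : dotProduct (star y) (vecMulVec x x *ᵥ y) = (x ⬝ᵥ y) * (x ⬝ᵥ y) := by
      simp only [star_trivial, dotProduct, Matrix.mulVec, vecMulVec_apply,
        Finset.mul_sum, Finset.sum_mul]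
      rw [Finset.sum_comm]
      exact Finset.sum_congr rfl fun i _ => Finset.sum_congr rfl fun j _ => by ring
    rw [h]
    exact mul_self_nonneg _

private lemma aux_trace_mul_vecMulVec {d : ℕ} (B : Matrix (Fin d) (Fin d) ℝ) (x : Fin d → ℝ) :
    (B * vecMulVec x x).trace = x ⬝ᵥ B *ᵥ x := by
  simp only [Matrix.trace, Matrix.diag, Matrix.mul_apply, vecMulVec_apply, dotProduct,
    Matrix.mulVec, Finset.mul_sum]
  exact Finset.sum_congr rfl fun i _ => Finset.sum_congr rfl fun j _ => by ring

private lemma aux_trace_vecMulVec {d : ℕ} (x : Fin d → ℝ) :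
    (vecMulVec x x).trace = x ⬝ᵥ x := by
  simp [Matrix.trace, Matrix.diag, vecMulVec_apply, dotProduct]

private lemma aux_trace_eq_sum_eigen {d : ℕ} {A : Matrix (Fin d) (Fin d) ℝ}
    (hA : A.IsHermitian) : A.trace = ∑ i, hA.eigenvalues i := by
  have hU : (star (hA.eigenvectorUnitary : Matrix (Fin d) (Fin d) ℝ)) *
      (hA.eigenvectorUnitary : Matrix (Fin d) (Fin d) ℝ) = 1 :=
    (Matrix.mem_unitaryGroup_iff').mp hA.eigenvectorUnitary.2
  conv_lhs => rw [hA.spectral_theorem, Unitary.conjStarAlgAut_apply]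
  rw [Matrix.trace_mul_cycle, hU, Matrix.one_mul, Matrix.trace_diagonal]
  simp

private lemma aux_det_one_add {d : ℕ} {C : Matrix (Fin d) (Fin d) ℝ} (hC : C.PosSemidef) :
    1 + C.trace ≤ (1 + C).det := by
  have hH := hC.1
  have ha : ∀ i, 0 ≤ hH.eigenvalues i := hC.eigenvalues_nonneg
  set U : Matrix (Fin d) (Fin d) ℝ := (hH.eigenvectorUnitary : Matrix (Fin d) (Fin d) ℝ) with hUdef
  set D : Matrix (Fin d) (Fin d) ℝ := diagonal (RCLike.ofReal ∘ hH.eigenvalues) with hDdef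
  have hU1 : U * star U = 1 := (Matrix.mem_unitaryGroup_iff).mp hH.eigenvectorUnitary.2
  have key : 1 + C = U * (1 + D) * star U := by
    conv_lhs => rw [hH.spectral_theorem, Unitary.conjStarAlgAut_apply]
    rw [Matrix.mul_add, Matrix.mul_one, Matrix.add_mul, hU1]
  have hdetU : U.det * (star U).det = 1 := by rw [← det_mul, hU1, det_one]
  have hdet : (1 + C).det = (1 + D).det := by
    rw [key, det_mul, det_mul]
    linear_combination (1 + D).det * hdetU
  have hdiag : (1 + D : Matrix (Fin d) (Fin d) ℝ)
      = diagonal (fun i => 1 + hH.eigenvalues i) := by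
    rw [hDdef]
    rw [← Matrix.diagonal_one, Matrix.diagonal_add]
    rfl
  rw [hdet, hdiag, det_diagonal, aux_trace_eq_sum_eigen hH]
  exact aux_one_add_sum_le_prod _ _ fun i _ => ha i

private lemma aux_psd_trace_nonneg {d : ℕ} {A : Matrix (Fin d) (Fin d) ℝ}
    (hA : A.PosSemidef) : 0 ≤ A.trace := by
  rw [aux_trace_eq_sum_eigen hA.1]
  exact Finset.sum_nonneg fun i _ => hA.eigenvalues_nonneg i

private lemma aux_inv_quad_le {d : ℕ} {A : Matrix (Fin d) (Fin d) ℝ} {lam : ℝ}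
    (hlam0 : 0 < lam) (hA : A.PosDef) (hdiff : (A - lam • 1).PosSemidef) (x : Fin d → ℝ) :
    x ⬝ᵥ A⁻¹ *ᵥ x ≤ (x ⬝ᵥ x) / lam := by
  have hAd : IsUnit A.det := isUnit_iff_ne_zero.mpr hA.det_pos.ne'
  set y := A⁻¹ *ᵥ x with hy
  have hAy : A *ᵥ y = x := by
    rw [hy, Matrix.mulVec_mulVec, Matrix.mul_nonsing_inv _ hAd, Matrix.one_mulVec]
  have hq0 : 0 ≤ x ⬝ᵥ y := by
    have := hA.inv.posSemidef.dotProduct_mulVec_nonneg x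
    simpa using this
  have hlow : lam * (y ⬝ᵥ y) ≤ x ⬝ᵥ y := by
    have h := hdiff.dotProduct_mulVec_nonneg y
    simp only [star_trivial, Matrix.sub_mulVec, Matrix.smul_mulVec, Matrix.one_mulVec,
      dotProduct_sub, dotProduct_smul, smul_eq_mul, hAy] at h
    have h2 : y ⬝ᵥ x = x ⬝ᵥ y := dotProduct_comm _ _
    linarith [h]
  have hCS : (x ⬝ᵥ y) ^ 2 ≤ (x ⬝ᵥ x) * (y ⬝ᵥ y) := by
    have := Finset.sum_mul_sq_le_sq_mul_sq Finset.univ x y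
    simpa [dotProduct, sq] using this
  have hxx : 0 ≤ x ⬝ᵥ x := by
    simpa [dotProduct] using Finset.sum_nonneg fun i (_ : i ∈ Finset.univ) => mul_self_nonneg (x i)
  rw [le_div_iff₀ hlam0]
  rcases hq0.eq_or_lt with h | h
  · rw [← h, zero_mul]
    exact hxx
  · nlinarith [mul_le_mul_of_nonneg_left hCS hlam0.le, mul_le_mul_of_nonneg_left hlow hxx, h]

private lemma aux_det_add_ge {d : ℕ} {A S : Matrix (Fin d) (Fin d) ℝ}
    (hA : A.PosDef) (hS : S.PosSemidef) :
    A.det * (1 + (A⁻¹ * S).trace) ≤ (A + S).det := by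
  set R := CFC.sqrt A with hRdef
  have hRpsd : R.PosSemidef := (CFC.sqrt_nonneg A).posSemidef
  have hRR : R * R = A := CFC.sqrt_mul_sqrt_self A hA.posSemidef.nonneg
  have hdetR : R.det * R.det = A.det := by rw [← det_mul, hRR]
  have hRdetne : R.det ≠ 0 := by
    intro h
    rw [h, mul_zero] at hdetR
    exact hA.det_pos.ne' hdetR.symm
  have hRunit : IsUnit R.det := isUnit_iff_ne_zero.mpr hRdetne
  set C := R⁻¹ * S * R⁻¹ with hCdef
  have hCpsd : C.PosSemidef := by
    have h := hS.conjTranspose_mul_mul_same (R⁻¹)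
    rwa [hRpsd.1.inv.eq] at h
  have hkey : A + S = R * (1 + C) * R := by
    rw [Matrix.mul_add, Matrix.mul_one, Matrix.add_mul, hRR]
    congr 1
    symm
    calc R * (R⁻¹ * S * R⁻¹) * R = (R * R⁻¹) * S * (R⁻¹ * R) := by
          simp only [Matrix.mul_assoc]
      _ = S := by
          rw [Matrix.mul_nonsing_inv _ hRunit, Matrix.nonsing_inv_mul _ hRunit,
            Matrix.one_mul, Matrix.mul_one]
  have htr : C.trace = (A⁻¹ * S).trace := by
    rw [hCdef, Matrix.trace_mul_cycle, ← Matrix.mul_inv_rev, hRR]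
  have hdet1C := aux_det_one_add hCpsd
  have hsplit : (A + S).det = A.det * (1 + C).det := by
    rw [hkey, det_mul, det_mul]
    linear_combination (1 + C).det * hdetR
  rw [hsplit, ← htr]
  nlinarith [hA.det_pos, hdet1C]

private lemma aux_le_two_log {u : ℝ} (h0 : 0 ≤ u) (h1 : u ≤ 1) :
    u ≤ 2 * Real.log (1 + u) := by
  have h2 : (0:ℝ) < 1 + u := by linarith
  have hF : 1 - u / 2 ≤ Real.exp (-(u / 2)) := by
    have := Real.add_one_le_exp (-(u / 2))
    linarith
  have hmul : Real.exp (u / 2) * Real.exp (-(u / 2)) = 1 := by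
    rw [← Real.exp_add]
    simp
  have hexp : Real.exp (u / 2) ≤ 1 + u := by
    have hq : 1 ≤ (1 + u) * (1 - u / 2) := by nlinarith
    have h3 : Real.exp (u / 2) * (1 - u / 2) ≤ Real.exp (u / 2) * Real.exp (-(u / 2)) :=
      mul_le_mul_of_nonneg_left hF (Real.exp_pos _).le
    rw [hmul] at h3
    have h4 : (0:ℝ) < 1 - u / 2 := by linarith
    nlinarith
  have := (Real.le_log_iff_exp_le h2).mpr hexp
  linarith

private lemma aux_det_le_pow_trace {d : ℕ} (hd : 0 < d) {A : Matrix (Fin d) (Fin d) ℝ}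
    (hA : A.PosSemidef) : A.det ≤ (A.trace / d) ^ d := by
  have hH := hA.1
  have ha : ∀ i, 0 ≤ hH.eigenvalues i := hA.eigenvalues_nonneg
  have hdet : A.det = ∏ i, hH.eigenvalues i := by
    simpa using hH.det_eq_prod_eigenvalues
  have hdne : (d : ℝ) ≠ 0 := Nat.cast_ne_zero.mpr hd.ne'
  have hAM : (∏ i, hH.eigenvalues i ^ (1 / (d:ℝ))) ≤ ∑ i, (1 / (d:ℝ)) * hH.eigenvalues i := by
    refine Real.geom_mean_le_arith_mean_weighted Finset.univ _ _
      (fun i _ => by positivity) ?_ (fun i _ => ha i)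
    rw [Finset.sum_const, Finset.card_univ, Fintype.card_fin, nsmul_eq_mul]
    field_simp
  have hsum : ∑ i, (1 / (d:ℝ)) * hH.eigenvalues i = A.trace / d := by
    rw [aux_trace_eq_sum_eigen hH, Finset.sum_div]
    exact Finset.sum_congr rfl fun i _ => by ring
  have hgnn : 0 ≤ ∏ i, hH.eigenvalues i ^ (1 / (d:ℝ)) :=
    Finset.prod_nonneg fun i _ => Real.rpow_nonneg (ha i) _
  have hpow : (∏ i, hH.eigenvalues i ^ (1 / (d:ℝ))) ^ d = ∏ i, hH.eigenvalues i := by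
    rw [← Finset.prod_pow]
    refine Finset.prod_congr rfl fun i _ => ?_
    rw [← Real.rpow_natCast (hH.eigenvalues i ^ (1 / (d:ℝ))) d, ← Real.rpow_mul (ha i)]
    rw [one_div, inv_mul_cancel₀ hdne, Real.rpow_one]
  rw [hdet, ← hpow]
  exact pow_le_pow_left₀ hgnn (hsum ▸ hAM) d

theorem sum_selfNormalized_le_sqrt (d n K : ℕ) (L lam : ℝ) (hL : 0 ≤ L)
    (hlam0 : 0 < lam) (hlam : K * L ^ 2 ≤ lam)
    (Kt : ℕ → ℕ) (hKt : ∀ t, Kt t ≤ K)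
    (x : (t : ℕ) → Fin (Kt t) → Fin d → ℝ)
    (hx : ∀ t k, Real.sqrt (x t k ⬝ᵥ x t k) ≤ L)
    (M : ℕ → Matrix (Fin d) (Fin d) ℝ)
    (h0 : M 0 = lam • (1 : Matrix (Fin d) (Fin d) ℝ))
    (hrec : ∀ t, M (t + 1) = M t + ∑ k, vecMulVec (x (t + 1) k) (x (t + 1) k)) :
    ∑ t ∈ Finset.range n, ∑ k, Real.sqrt (x (t + 1) k ⬝ᵥ (M t)⁻¹ *ᵥ x (t + 1) k) ≤
      Real.sqrt (2 * d * n * K * Real.log (1 + n * K * L ^ 2 / (lam * d))) := by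
  classical
  rcases Nat.eq_zero_or_pos d with hd | hd
  · subst hd
    have hz : (∑ t ∈ Finset.range n, ∑ k, Real.sqrt (x (t + 1) k ⬝ᵥ (M t)⁻¹ *ᵥ x (t + 1) k))
        = 0 := by
      refine Finset.sum_eq_zero fun t _ => Finset.sum_eq_zero fun k _ => ?_
      have hzz : x (t+1) k ⬝ᵥ (M t)⁻¹ *ᵥ x (t+1) k = 0 := by
        simp [dotProduct]
      rw [hzz, Real.sqrt_zero]
    rw [hz]
    exact Real.sqrt_nonneg _
  have hdR : (0:ℝ) < d := by exact_mod_cast hd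
  -- basic facts
  have hxx0 : ∀ t (k : Fin (Kt t)), 0 ≤ x t k ⬝ᵥ x t k := fun t k => by
    simpa [dotProduct] using
      Finset.sum_nonneg fun i (_ : i ∈ Finset.univ) => mul_self_nonneg (x t k i)
  have hxx : ∀ t (k : Fin (Kt t)), x t k ⬝ᵥ x t k ≤ L ^ 2 := by
    intro t k
    nlinarith [Real.sq_sqrt (hxx0 t k), hx t k, Real.sqrt_nonneg (x t k ⬝ᵥ x t k)]
  have hSpsd : ∀ t, (∑ k, vecMulVec (x t k) (x t k)).PosSemidef := fun t =>
    Finset.sum_induction _ _ (fun a b ha hb => ha.add hb) Matrix.PosSemidef.zero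
      (fun k _ => aux_psd_vecMulVec _)
  have hdiff : ∀ t, (M t - lam • 1).PosSemidef := by
    intro t
    induction t with
    | zero => rw [h0, sub_self]; exact Matrix.PosSemidef.zero
    | succ t ih =>
      have h' : M (t+1) - lam • 1 = (M t - lam • 1) + ∑ k, vecMulVec (x (t+1) k) (x (t+1) k) := by
        rw [hrec t]; abel
      rw [h']
      exact ih.add (hSpsd (t+1))
  have hlam1 : (lam • (1 : Matrix (Fin d) (Fin d) ℝ)).PosDef := by
    rw [Matrix.smul_one_eq_diagonal]
    exact Matrix.posDef_diagonal_iff.mpr fun _ => hlam0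
  have hMpd : ∀ t, (M t).PosDef := by
    intro t
    have h' : M t = lam • 1 + (M t - lam • 1) := by abel
    have h2 := hlam1.add_posSemidef (hdiff t)
    rwa [← h'] at h2
  set a : (t : ℕ) → Fin (Kt (t+1)) → ℝ :=
    fun t k => x (t+1) k ⬝ᵥ (M t)⁻¹ *ᵥ x (t+1) k with hadef
  have ha0 : ∀ t k, 0 ≤ a t k := fun t k => by
    simpa using (hMpd t).inv.posSemidef.dotProduct_mulVec_nonneg (x (t+1) k)
  have hsum1 : ∀ t, (∑ k, a t k) ≤ 1 := by
    intro t
    have hb : ∀ k : Fin (Kt (t+1)), a t k ≤ L ^ 2 / lam := fun k =>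
      le_trans (aux_inv_quad_le hlam0 (hMpd t) (hdiff t) _)
        (by gcongr; exact hxx (t+1) k)
    calc ∑ k, a t k ≤ ∑ _k : Fin (Kt (t+1)), L ^ 2 / lam := Finset.sum_le_sum fun k _ => hb k
      _ = (Kt (t+1) : ℝ) * (L ^ 2 / lam) := by
          rw [Finset.sum_const, Finset.card_univ, Fintype.card_fin, nsmul_eq_mul]
      _ ≤ (K : ℝ) * (L ^ 2 / lam) := by
          have h1 : ((Kt (t+1)):ℝ) ≤ (K:ℝ) := Nat.cast_le.mpr (hKt (t+1))
          have h2 : (0:ℝ) ≤ L ^ 2 / lam := by positivity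
          exact mul_le_mul_of_nonneg_right h1 h2
      _ ≤ 1 := by
          rw [mul_div_assoc'] at *
          exact (div_le_one hlam0).mpr hlam
  have hstep : ∀ t, (∑ k, a t k) ≤ 2 * (Real.log (M (t+1)).det - Real.log (M t).det) := by
    intro t
    have hu0 : 0 ≤ ∑ k, a t k := Finset.sum_nonneg fun k _ => ha0 t k
    have hu1 := hsum1 t
    have htr : ((M t)⁻¹ * ∑ k, vecMulVec (x (t+1) k) (x (t+1) k)).trace = ∑ k, a t k := by
      rw [Matrix.mul_sum, Matrix.trace_sum]
      exact Finset.sum_congr rfl fun k _ => aux_trace_mul_vecMulVec _ _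
    have hdet : (M t).det * (1 + ∑ k, a t k) ≤ (M (t+1)).det := by
      have h := aux_det_add_ge (hMpd t) (hSpsd (t+1))
      rw [htr, ← hrec t] at h
      exact h
    have hlogd : Real.log ((M t).det * (1 + ∑ k, a t k)) ≤ Real.log (M (t+1)).det := by
      apply Real.log_le_log _ hdet
      have := (hMpd t).det_pos
      nlinarith
    rw [Real.log_mul (hMpd t).det_pos.ne' (by linarith : (1:ℝ) + ∑ k, a t k ≠ 0)] at hlogd
    have h2l := aux_le_two_log hu0 hu1
    linarith
  have htel : (∑ t ∈ Finset.range n, ∑ k, a t k)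
      ≤ 2 * (Real.log (M n).det - Real.log (M 0).det) :=
    calc ∑ t ∈ Finset.range n, ∑ k, a t k
        ≤ ∑ t ∈ Finset.range n, 2 * (Real.log (M (t+1)).det - Real.log (M t).det) :=
          Finset.sum_le_sum fun t _ => hstep t
      _ = 2 * ∑ t ∈ Finset.range n, (Real.log (M (t+1)).det - Real.log (M t).det) := by
          rw [Finset.mul_sum]
      _ = 2 * (Real.log (M n).det - Real.log (M 0).det) := by
          rw [Finset.sum_range_sub (fun t => Real.log (M t).det)]
  have hlog0 : Real.log (M 0).det = d * Real.log lam := by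
    rw [h0, Matrix.det_smul, Matrix.det_one, mul_one, Real.log_pow]
    simp
  -- trace bound
  have htrace : ∀ m : ℕ, (M m).trace ≤ lam * d + m * (K * L ^ 2) := by
    intro m
    induction m with
    | zero =>
      rw [h0, Matrix.trace_smul, Matrix.trace_one, smul_eq_mul]
      simp
    | succ m ih =>
      have hs : (∑ k, vecMulVec (x (m+1) k) (x (m+1) k)).trace ≤ K * L ^ 2 := by
        rw [Matrix.trace_sum]
        calc ∑ k, (vecMulVec (x (m+1) k) (x (m+1) k)).trace
            ≤ ∑ _k : Fin (Kt (m+1)), L ^ 2 := Finset.sum_le_sum fun k _ => by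
              rw [aux_trace_vecMulVec]; exact hxx (m+1) k
          _ = (Kt (m+1) : ℝ) * L ^ 2 := by
              rw [Finset.sum_const, Finset.card_univ, Fintype.card_fin, nsmul_eq_mul]
          _ ≤ (K : ℝ) * L ^ 2 := by
              have h1 : ((Kt (m+1)):ℝ) ≤ (K:ℝ) := Nat.cast_le.mpr (hKt (m+1))
              nlinarith
      rw [hrec m, Matrix.trace_add]
      push_cast
      push_cast at ih
      linarith
  have htrlow : lam * d ≤ (M n).trace := by
    have h := aux_psd_trace_nonneg (hdiff n)
    rw [Matrix.trace_sub, Matrix.trace_smul, Matrix.trace_one, smul_eq_mul] at h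
    simp only [Fintype.card_fin] at h
    linarith
  set r : ℝ := n * K * L ^ 2 / (lam * d) with hrdef
  have hr0 : 0 ≤ r := by positivity
  have hdetlog : Real.log (M n).det ≤ d * (Real.log lam + Real.log (1 + r)) := by
    have h1 : (M n).det ≤ ((M n).trace / d) ^ d := aux_det_le_pow_trace hd (hMpd n).posSemidef
    have hTdpos : 0 < (M n).trace / d := by
      apply div_pos _ hdR
      nlinarith
    have hTd : (M n).trace / d ≤ lam * (1 + r) := by
      rw [div_le_iff₀ hdR, hrdef]
      have he : lam * (1 + n * K * L ^ 2 / (lam * d)) * d = lam * d + n * (K * L ^ 2) := by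
        field_simp
      rw [he]
      exact htrace n
    have h2 : Real.log (M n).det ≤ Real.log (((M n).trace / d) ^ d) :=
      Real.log_le_log (hMpd n).det_pos h1
    rw [Real.log_pow] at h2
    have h3 : Real.log ((M n).trace / d) ≤ Real.log (lam * (1 + r)) :=
      Real.log_le_log hTdpos hTd
    rw [Real.log_mul hlam0.ne' (by linarith : (1:ℝ) + r ≠ 0)] at h3
    calc Real.log (M n).det ≤ d * Real.log ((M n).trace / d) := h2
      _ ≤ d * (Real.log lam + Real.log (1 + r)) := by
          exact mul_le_mul_of_nonneg_left h3 hdR.le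
  have hB : (∑ t ∈ Finset.range n, ∑ k, a t k) ≤ 2 * d * Real.log (1 + r) := by
    rw [hlog0] at htel
    nlinarith [htel, hdetlog]
  -- Cauchy-Schwarz
  set s : Finset ((t : ℕ) × Fin (Kt (t+1))) :=
    (Finset.range n).sigma (fun t => (Finset.univ : Finset (Fin (Kt (t+1))))) with hsdef
  have hsig : (∑ t ∈ Finset.range n, ∑ k, Real.sqrt (a t k))
      = ∑ p ∈ s, Real.sqrt (a p.1 p.2) := by
    rw [hsdef]
    exact (Finset.sum_sigma (Finset.range n)
      (fun t => (Finset.univ : Finset (Fin (Kt (t+1)))))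
      (fun (p : (t : ℕ) × Fin (Kt (t+1))) => Real.sqrt (a p.1 p.2))).symm
  have hsiga : (∑ t ∈ Finset.range n, ∑ k, a t k) = ∑ p ∈ s, a p.1 p.2 := by
    rw [hsdef]
    exact (Finset.sum_sigma (Finset.range n)
      (fun t => (Finset.univ : Finset (Fin (Kt (t+1)))))
      (fun (p : (t : ℕ) × Fin (Kt (t+1))) => a p.1 p.2)).symm
  have hcard : (s.card : ℝ) ≤ (n : ℝ) * K := by
    rw [hsdef, Finset.card_sigma]
    have := Finset.sum_le_card_nsmul (Finset.range n)
      (fun t => (Finset.univ : Finset (Fin (Kt (t+1)))).card) K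
      (fun t _ => by simpa using hKt (t+1))
    simp only [Finset.card_range, smul_eq_mul] at this
    exact_mod_cast this
  have hcs := Finset.sum_mul_sq_le_sq_mul_sq s (fun _ => (1:ℝ))
    (fun p => Real.sqrt (a p.1 p.2))
  simp only [one_mul, one_pow] at hcs
  rw [Finset.sum_const, nsmul_eq_mul, mul_one] at hcs
  have hsq : (∑ p ∈ s, Real.sqrt (a p.1 p.2) ^ 2) = ∑ p ∈ s, a p.1 p.2 :=
    Finset.sum_congr rfl fun p _ => Real.sq_sqrt (ha0 p.1 p.2)
  rw [hsq] at hcs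
  have hsa0 : 0 ≤ ∑ p ∈ s, a p.1 p.2 := Finset.sum_nonneg fun p _ => ha0 p.1 p.2
  have hfinal : (∑ t ∈ Finset.range n, ∑ k, Real.sqrt (a t k)) ^ 2
      ≤ 2 * d * n * K * Real.log (1 + r) := by
    rw [hsig]
    calc (∑ p ∈ s, Real.sqrt (a p.1 p.2)) ^ 2 ≤ (s.card : ℝ) * ∑ p ∈ s, a p.1 p.2 := hcs
      _ ≤ ((n : ℝ) * K) * (2 * d * Real.log (1 + r)) := by
          apply mul_le_mul hcard _ hsa0 (by positivity)
          rw [← hsiga]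
          exact hB
      _ = 2 * d * n * K * Real.log (1 + r) := by ring
  exact Real.le_sqrt_of_sq_le hfinal
end

section
/- Let d ≥ 1, λ > 0, λ_x > 0, γ > 0, u ≥ 1, 0 < δ ≤ uγ²λ_xλ/128, and suppose λ ≤ d log(1 + T/(λd)) + 2 log(4u/δ). Then for all T ≥ (512d/(γ²λ_x)) log(4u/δ), we have (sqrt(d log(1 + T/(λd)) + 2 log(4u/δ)) + sqrt(λ)) / sqrt(λ + Tλ_x/8) ≤ γ/2. -/
/-!
Write `s = 4u/δ`, `c = λd`, `a = 256d/(γ²λ_x)` and `L = d log(1 + T/c) + 2 log s`, so that the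
hypotheses read `2a/c ≤ s` and `2a log s ≤ T`. Both terms of `L` are then at most `γ²λ_x T/256`:
`2 log s ≤ T/a` directly, and `log(1 + T/c) ≤ T/a` either because `log(1 + x) ≤ x` (when `a ≤ c`)
or, once `T ≥ c`, from `log(1 + T/c) ≤ log(2T/c)` and the fact that `t ≥ 2α log(αβ)` implies
`t ≥ α log(βt)`. Since `λ ≤ L`, the numerator is at most `2√L`, and `L ≤ (γ/4)²(λ + Tλ_x/8)`.
-/

open Real

lemma Real.log_le_half_self {x : ℝ} (hx : 0 < x) : log x ≤ x / 2 := by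
  have h : exp 1 * log x ≤ x := by simpa [exp_log hx] using exp_one_mul_le_exp (x := log x)
  rcases le_or_gt (log x) 0 with hlog | hlog
  · linarith
  · nlinarith [exp_one_gt_d9]

lemma Real.mul_log_mul_le_of_two_mul_log_le {a b t : ℝ} (ha : 0 < a) (hb : 0 < b) (ht : 0 < t)
    (h : 2 * a * log (a * b) ≤ t) : a * log (b * t) ≤ t := by
  have hsplit : log (b * t) = log (a * b) + log (t / a) := by
    rw [← log_mul (by positivity) (by positivity)]
    congr 1
    field_simp
  have hta : log (t / a) ≤ t / a / 2 := log_le_half_self (by positivity)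
  have hab : log (a * b) ≤ t / a / 2 := by
    rw [le_div_iff₀ two_pos, le_div_iff₀ ha]
    linarith
  calc a * log (b * t) ≤ a * (t / a) := by
        rw [hsplit]; exact mul_le_mul_of_nonneg_left (by linarith) ha.le
    _ = t := by field_simp

section

variable {a c s T : ℝ}

lemma neg_lt_of_two_mul_log_le (ha : 0 < a) (hc : 0 < c) (hs : 2 * a / c ≤ s)
    (hT : 2 * a * log s ≤ T) : -c < T := by
  have hs0 : 0 < s := lt_of_lt_of_le (by positivity) hs
  have hinv : s⁻¹ ≤ c / (2 * a) := by
    rw [inv_le_comm₀ hs0 (by positivity), inv_div]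
    exact hs
  have hlog : 1 - c / (2 * a) ≤ log s := (one_sub_inv_le_log_of_pos hs0).trans' (by linarith)
  have : 2 * a * (1 - c / (2 * a)) = 2 * a - c := by field_simp
  nlinarith

lemma log_one_add_div_le_div (ha : 0 < a) (hc : 0 < c) (hT0 : 0 ≤ T) (hs : 2 * a / c ≤ s)
    (hT : 2 * a * log s ≤ T) : log (1 + T / c) ≤ T / a := by
  rcases le_or_gt a c with hac | hac
  · calc log (1 + T / c) ≤ T / c := by
          linarith [log_le_sub_one_of_pos (show 0 < 1 + T / c by positivity)]
      _ ≤ T / a := div_le_div_of_nonneg_left hT0 ha hac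
  · have hlog_s : log (2 * a / c) ≤ log s := log_le_log (by positivity) hs
    have hlog_two : 1 / 2 < log (2 * a / c) :=
      (log_two_gt_d9.trans_le (log_le_log two_pos (by rw [le_div_iff₀ hc]; linarith))).trans'
        (by norm_num)
    have hcT : c ≤ T := by nlinarith
    have hbound : a * log (2 / c * T) ≤ T :=
      mul_log_mul_le_of_two_mul_log_le ha (by positivity) (by linarith)
        (by rw [show a * (2 / c) = 2 * a / c by ring]; nlinarith)
    calc log (1 + T / c) ≤ log (2 / c * T) :=
          log_le_log (by positivity)
            (by rw [div_mul_eq_mul_div, le_div_iff₀ hc]; field_simp; linarith)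
      _ ≤ T / a := by rw [le_div_iff₀ ha]; linarith

-- `T > -c` keeps `1 + T/c` positive, so for `T < 0` both logarithms are negative.
lemma nonneg_of_two_mul_log_le {d : ℝ} (ha : 0 < a) (hc : 0 < c) (hs : 2 * a / c ≤ s)
    (hT : 2 * a * log s ≤ T) (hd : 0 ≤ d) (hpos : 0 < d * log (1 + T / c) + 2 * log s) :
    0 ≤ T := by
  by_contra! hneg
  have hcT := neg_lt_of_two_mul_log_le ha hc hs hT
  have hlog_c : log (1 + T / c) < 0 :=
    log_neg (by rw [← neg_lt_iff_pos_add', lt_div_iff₀ hc]; linarith)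
      (by linarith [div_neg_of_neg_of_pos hneg hc])
  have hlog_s : log s < 0 := by nlinarith
  nlinarith

lemma mul_log_one_add_div_add_two_mul_log_le {d : ℝ} (ha : 0 < a) (hc : 0 < c) (hT0 : 0 ≤ T)
    (hs : 2 * a / c ≤ s) (hT : 2 * a * log s ≤ T) (hd : 1 ≤ d) :
    d * log (1 + T / c) + 2 * log s ≤ 2 * d * (T / a) := by
  have hlog_c : d * log (1 + T / c) ≤ d * (T / a) :=
    mul_le_mul_of_nonneg_left (log_one_add_div_le_div ha hc hT0 hs hT) (by positivity)
  have hlog_s : 2 * log s ≤ T / a := by rw [le_div_iff₀ ha]; linarith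
  nlinarith [div_nonneg hT0 ha.le]

end

lemma add_sqrt_div_sqrt_le {L x D g : ℝ} (hxL : x ≤ L) (hD : 0 < D) (hg : 0 ≤ g)
    (hL : L ≤ (g / 4) ^ 2 * D) : (√L + √x) / √D ≤ g / 2 := by
  have hsqrtL : √L ≤ g / 4 * √D := by
    simpa [sqrt_mul (sq_nonneg _), sqrt_sq (show 0 ≤ g / 4 by positivity)] using sqrt_le_sqrt hL
  have hsqrtx : √x ≤ √L := sqrt_le_sqrt hxL
  rw [div_le_iff₀ (sqrt_pos.mpr hD)]
  linarith

theorem confidence_radius_le_gamma_div_two_general (d : ℕ) (hd : 1 ≤ d)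
    (lam lamx γ u δ : ℝ) (hlam : 0 < lam) (hlamx : 0 < lamx) (hγ : 0 < γ)
    (hδ0 : 0 < δ) (hδ : δ ≤ u * γ ^ 2 * lamx * lam / 128) :
    ∀ T : ℝ, 512 * d / (γ ^ 2 * lamx) * Real.log (4 * u / δ) ≤ T →
      lam ≤ d * Real.log (1 + T / (lam * d)) + 2 * Real.log (4 * u / δ) →
      (Real.sqrt (d * Real.log (1 + T / (lam * d)) + 2 * Real.log (4 * u / δ)) +
        Real.sqrt lam) / Real.sqrt (lam + T * lamx / 8) ≤ γ / 2 := by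
  intro T hT hL
  have hd1 : (1 : ℝ) ≤ d := by exact_mod_cast hd
  have hu : 0 < u := by
    have : 0 < u * (γ ^ 2 * lamx * lam / 128) := by linarith
    exact pos_of_mul_pos_left this (by positivity)
  set s := 4 * u / δ
  set c := lam * d
  set a := 256 * d / (γ ^ 2 * lamx)
  have ha : 0 < a := by positivity
  have hc : 0 < c := by positivity
  have hs : 2 * a / c ≤ s := by
    calc 2 * a / c = 4 * u / (u * γ ^ 2 * lamx * lam / 128) := by
          simp only [a, c]; field_simp; ring
      _ ≤ s := div_le_div_of_nonneg_left (by positivity) hδ0 hδ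
  have hTs : 2 * a * log s ≤ T := by
    convert hT using 2
    simp only [a]; ring
  have hT0 : 0 ≤ T :=
    nonneg_of_two_mul_log_le ha hc hs hTs (by positivity) (hlam.trans_le hL)
  have hL_le := mul_log_one_add_div_add_two_mul_log_le ha hc hT0 hs hTs hd1
  have hda : 2 * d * (T / a) = γ ^ 2 * lamx * T / 128 := by
    simp only [a]; field_simp; ring
  refine add_sqrt_div_sqrt_le hL (by positivity) hγ.le ?_
  nlinarith [mul_pos (pow_pos hγ 2) hlam]

theorem confidence_radius_le_gamma_div_two (d : ℕ) (hd : 1 ≤ d)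
    (lam lamx γ u δ : ℝ) (hlam : 0 < lam) (hlamx : 0 < lamx) (hγ : 0 < γ)
    (hu : 1 ≤ u) (hδ0 : 0 < δ) (hδ : δ ≤ u * γ ^ 2 * lamx * lam / 128) :
    ∀ T : ℝ, 512 * d / (γ ^ 2 * lamx) * Real.log (4 * u / δ) ≤ T →
      lam ≤ d * Real.log (1 + T / (lam * d)) + 2 * Real.log (4 * u / δ) →
      (Real.sqrt (d * Real.log (1 + T / (lam * d)) + 2 * Real.log (4 * u / δ)) +
        Real.sqrt lam) / Real.sqrt (lam + T * lamx / 8) ≤ γ / 2 :=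
  confidence_radius_le_gamma_div_two_general d hd lam lamx γ u δ hlam hlamx hγ hδ0 hδ
end
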